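/- Let ε > 0, C ∈ ℝ, and define u₁(t) = 1/√(1 + C²e^{2εt}), u₂(t) = (C/a)·e^{εt}/√(1 + C²e^{2εt}) for a > 0. Then x₁(t) = (1/ε)·(e^{εt}√(1+C²) − √(1+C²e^{2εt})) and x₂(t) = (1/(aε))·(arsinh(C·e^{εt}) − arsinh(C)) satisfy x₁(0) = x₂(0) = 0, x₁'(t) = u₁(t) + ε·x₁(t), and x₂'(t) = u₂(t) for all t ≥ 0. -/

import Mathlib

/-- Explicit solution of the linear control system `x₁' = u₁ + ε x₁`, `x₂' = u₂` with
zero initial data, where `u₁(t) = 1/√(1 + C² e^{2εt})` and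
`u₂(t) = (C/a) e^{εt}/√(1 + C² e^{2εt})`. -/
theorem explicit_solution_linear_current (ε a C : ℝ) (hε : 0 < ε) (ha : 0 < a) :
    let u₁ : ℝ → ℝ := fun t => 1 / Real.sqrt (1 + C ^ 2 * Real.exp (2 * ε * t))
    let u₂ : ℝ → ℝ := fun t =>
      (C / a) * Real.exp (ε * t) / Real.sqrt (1 + C ^ 2 * Real.exp (2 * ε * t))
    let x₁ : ℝ → ℝ := fun t => (1 / ε) * (Real.exp (ε * t) * Real.sqrt (1 + C ^ 2)
      - Real.sqrt (1 + C ^ 2 * Real.exp (2 * ε * t)))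
    let x₂ : ℝ → ℝ := fun t =>
      (1 / (a * ε)) * (Real.arsinh (C * Real.exp (ε * t)) - Real.arsinh C)
    x₁ 0 = 0 ∧ x₂ 0 = 0 ∧
      ∀ t : ℝ, 0 ≤ t →
        HasDerivAt x₁ (u₁ t + ε * x₁ t) t ∧ HasDerivAt x₂ (u₂ t) t := by
  intro u₁ u₂ x₁ x₂
  refine ⟨by simp [x₁], by simp [x₂], ?_⟩
  intro t ht
  have hpos : 0 < 1 + C ^ 2 * Real.exp (2 * ε * t) := by positivity
  have hs : 0 < Real.sqrt (1 + C ^ 2 * Real.exp (2 * ε * t)) := Real.sqrt_pos.mpr hpos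
  have hE : HasDerivAt (fun t : ℝ => Real.exp (ε * t)) (ε * Real.exp (ε * t)) t := by
    simpa [mul_comm, Function.comp_def] using (Real.hasDerivAt_exp (ε * t)).comp t
      ((hasDerivAt_id t).const_mul ε)
  have hE2 : HasDerivAt (fun t : ℝ => 1 + C ^ 2 * Real.exp (2 * ε * t))
      (C ^ 2 * (2 * ε * Real.exp (2 * ε * t))) t := by
    have h := (Real.hasDerivAt_exp (2 * ε * t)).comp t ((hasDerivAt_id t).const_mul (2 * ε))
    simpa [mul_comm, mul_assoc, mul_left_comm] using (h.const_mul (C ^ 2)).const_add 1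
  have hexp2 : Real.exp (2 * ε * t) = Real.exp (ε * t) ^ 2 := by
    rw [sq, ← Real.exp_add]; ring_nf
  constructor
  · have hsq := (Real.hasDerivAt_sqrt hpos.ne').comp t hE2
    have h := (((hE.mul_const (Real.sqrt (1 + C ^ 2))).sub hsq).const_mul (1 / ε))
    convert h using 1
    show u₁ t + ε * x₁ t = _
    simp only [u₁, x₁]
    have hss : Real.sqrt (1 + C ^ 2 * Real.exp (2 * ε * t)) *
        Real.sqrt (1 + C ^ 2 * Real.exp (2 * ε * t)) = 1 + C ^ 2 * Real.exp (2 * ε * t) :=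
      Real.mul_self_sqrt hpos.le
    field_simp
    ring_nf
    ring_nf at hss
    linear_combination (-1 : ℝ) * hss
    all_goals rfl
  · have har := (Real.hasDerivAt_arsinh (C * Real.exp (ε * t))).comp t (hE.const_mul C)
    have h := har.const_mul (1 / (a * ε))
    have h' : HasDerivAt x₂ ((1 / (a * ε)) *
        ((Real.sqrt (1 + (C * Real.exp (ε * t)) ^ 2))⁻¹ * (C * (ε * Real.exp (ε * t))))) t := by
      simpa [x₂, mul_sub, mul_comm, mul_assoc, mul_left_comm] using
        (h.sub_const ((1 / (a * ε)) * Real.arsinh C))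
    convert h' using 1
    show u₂ t = _
    simp only [u₂]
    have harg : 1 + (C * Real.exp (ε * t)) ^ 2 = 1 + C ^ 2 * Real.exp (2 * ε * t) := by
      rw [hexp2]; ring
    rw [harg]
    field_simp
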